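/- Let G be a finite group with elements encoded as one-hot vectors and represented by right-multiplication permutation matrices T_g. Define the input-dependent SSM h₀ indexed by G, with input sequence g₁,...,gₙ ∈ G, transition matrices Aᵢ = T_{gᵢ}, B mapping a special start symbol to the one-hot vector of the identity element e (and all group tokens to 0). Then after processing the sequence $, g₁, ..., gₙ, the hidden state h_{n+1} is the one-hot vector of the product g₁·g₂·⋯·gₙ. In particular a one-layer input-dependent linear SSM exactly solves the word problem of any finite group. -/
import Mathlib


open Matrix

lemma step_onehot {G : Type*} [Group G] [Fintype G] [DecidableEq G] (m x : G) :
    (Matrix.of fun y x => if y = x * m then (1 : ℝ) else 0).mulVec (Pi.single x 1)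
      = Pi.single (x * m) (1 : ℝ) := by
  funext y
  simp only [Matrix.mulVec, dotProduct, Matrix.of_apply]
  rw [Finset.sum_eq_single x]
  · by_cases hy : y = x * m <;> simp [hy, Pi.single_apply]
  · intro b _ hb
    simp [Pi.single_apply, hb]
  · simp

/-- One-hot encode elements of a finite group `G`, and represent each `g : G` by the
`0/1` matrix of right multiplication by `g`, so that `T g *ᵥ (one-hot x) = one-hot (x * g)`.
An input-dependent linear SSM whose transition matrices are `T gᵢ`, started on the
one-hot vector of the identity (produced by the `B`-image of the start symbol `$`, with
group tokens contributing `0`), computes the one-hot vector of the product `g₁ ⋯ gₙ`: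
a one-layer input-dependent linear SSM exactly solves the word problem of any finite group. -/
theorem ids4_solves_group_word_problem {G : Type*} [Group G] [Fintype G] [DecidableEq G]
    {n : ℕ} (g : Fin n → G) (h : ℕ → G → ℝ)
    (T : G → Matrix G G ℝ)
    (hT : T = fun m => Matrix.of fun y x => if y = x * m then (1 : ℝ) else 0)
    (h0 : h 0 = 0)
    (h1 : h 1 = Pi.single (1 : G) (1 : ℝ))
    (hrec : ∀ i : Fin n, h (i + 2) = (T (g i)).mulVec (h (i + 1))) :
    h (n + 1) = Pi.single ((List.ofFn g).prod) (1 : ℝ) := by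
  subst hT
  have key : ∀ k, k ≤ n → h (k + 1) = Pi.single (((List.ofFn g).take k).prod) (1 : ℝ) := by
    intro k
    induction k with
    | zero => intro _; simpa using h1
    | succ k ih =>
      intro hk
      have hk' : k < n := hk
      have hkn : k < (List.ofFn g).length := by simpa using hk'
      have := hrec ⟨k, hk'⟩
      simp only [Fin.val_mk] at this
      rw [this, ih (le_of_lt hk'), step_onehot, List.prod_take_succ _ k hkn]
      congr 1
      simp
  have := key n le_rfl
  rwa [List.take_of_length_le (by simp)] at this
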